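/- arXiv:2310.10842 — 6 statements merged into one kernel-verified Lean document; each statement's English description precedes it below -/
import Mathlib

section
/- Let S be a lattice of rank 2 with basis e, σ and intersection form e² = 0, e·σ = 1, σ² = -2 (the Néron–Severi lattice of a generic elliptic K3 surface with section). Define the Mukai pairing on ℤ ⊕ (ℤe ⊕ ℤσ) ⊕ ℤ by ⟨(r₁,ℓ₁,c₁),(r₂,ℓ₂,c₂)⟩ = ℓ₁·ℓ₂ - r₁c₂ - r₂c₁. Then the map sending (n/m, k) with m ≥ 1, gcd(n,m) = 1, k ∈ ℤ, to the vector (m, nσ + (km + n - n^{φ(m)-1})e, (-n² + n(km + n - n^{φ(m)-1}) + 1)/m) is a well-defined bijection from ℚ × ℤ onto the set of vectors v = (r, ℓ, s) with r > 0 and ⟨v,v⟩ = -2 (where for n/m = 0/1 the term n^{φ(m)-1} is set to 0). -/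
/-- The Mukai pairing on `ℤ ⊕ NS ⊕ ℤ` where `NS = ℤe ⊕ ℤσ` with
`e² = 0`, `e·σ = 1`, `σ² = -2`. A divisor class `ℓ = b·e + n·σ`
is recorded as the pair `(b, n)`. -/
def mukaiPairing (v w : ℤ × (ℤ × ℤ) × ℤ) : ℤ :=
  (v.2.1.1 * w.2.1.2 + w.2.1.1 * v.2.1.2 - 2 * v.2.1.2 * w.2.1.2)
    - v.1 * w.2.2 - w.1 * v.2.2

/-- The power `n^{φ(m)-1}`, with the convention that it is `0` when
`m = 1` and `n = 0`. -/
def sphPow (n : ℤ) (m : ℕ) : ℤ :=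
  if m = 1 ∧ n = 0 then 0 else n ^ (Nat.totient m - 1)

/-- The parametrization of spherical Mukai vectors on a generic elliptic K3
surface with a section: `(n/m, k)` (with `m = q.den ≥ 1`, `n = q.num`,
`gcd(n,m) = 1`) is sent to
`(m, n·σ + (km + n - n^{φ(m)-1})·e, (-n² + n(km + n - n^{φ(m)-1}) + 1)/m)`. -/
def sphericalParam (p : ℚ × ℤ) : ℤ × (ℤ × ℤ) × ℤ :=
  let m : ℤ := (p.1.den : ℤ)
  let n : ℤ := p.1.num
  let b : ℤ := p.2 * m + n - sphPow n p.1.den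
  (m, (b, n), (-n ^ 2 + n * b + 1) / m)

/-!
For `gcd(n, m) = 1` Euler's theorem makes `n^{φ(m)-1}` an inverse of `n` modulo `m`, which
gives the exact division. A vector `(r, b·e + n·σ, s)` is spherical iff `r > 0` and
`r s = n b - n² + 1`; the latter says `n (b - n) ≡ -1 (mod r)`, so `n` is coprime to `r` and
`b ≡ n - n^{φ(r)-1} (mod r)`. Hence `n / r` and `k = (b - n + n^{φ(r)-1}) / r` are the unique
preimage.
-/

open Nat

theorem Int.ModEq.pow_totient {n : ℤ} {m : ℕ} (h : IsCoprime n m) :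
    n ^ φ m ≡ 1 [ZMOD m] := by
  have hunit := congrArg Units.val (ZMod.pow_totient (ZMod.unitOfIsCoprime n h))
  rw [Units.val_pow_eq_pow_val, ZMod.coe_unitOfIsCoprime, Units.val_one] at hunit
  rw [← ZMod.intCast_eq_intCast_iff]
  push_cast
  exact hunit

theorem mul_sphPow_modEq_one {n : ℤ} {m : ℕ} (hm : 0 < m) (h : IsCoprime n m) :
    n * sphPow n m ≡ 1 [ZMOD m] := by
  obtain rfl | hm1 := eq_or_ne m 1
  · exact_mod_cast Int.modEq_one
  rw [sphPow, if_neg (fun h ↦ hm1 h.1), mul_pow_sub_one (totient_pos.mpr hm).ne']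
  exact Int.ModEq.pow_totient h

theorem mukaiPairing_self_eq_neg_two_iff (r b n s : ℤ) :
    mukaiPairing (r, (b, n), s) (r, (b, n), s) = -2 ↔ r * s = n * b - n ^ 2 + 1 := by
  unfold mukaiPairing
  constructor <;> intro h <;> linarith

theorem den_dvd_sphericalParam_numerator (p : ℚ × ℤ) :
    (p.1.den : ℤ) ∣
      -p.1.num ^ 2 + p.1.num * (p.2 * p.1.den + p.1.num - sphPow p.1.num p.1.den) + 1 := by
  have hinv := (mul_sphPow_modEq_one p.1.pos p.1.isCoprime_num_den).dvd
  have hsplit : -p.1.num ^ 2 + p.1.num * (p.2 * p.1.den + p.1.num - sphPow p.1.num p.1.den) + 1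
      = p.1.den * (p.2 * p.1.num) + (1 - p.1.num * sphPow p.1.num p.1.den) := by ring
  rw [hsplit]
  exact dvd_add (dvd_mul_right _ _) hinv

theorem sphericalParam_mapsTo :
    Set.MapsTo sphericalParam Set.univ {v | 0 < v.1 ∧ mukaiPairing v v = -2} := by
  rintro ⟨q, k⟩ -
  refine ⟨show (0 : ℤ) < q.den by exact_mod_cast q.pos,
    (mukaiPairing_self_eq_neg_two_iff ..).mpr ?_⟩
  rw [Int.mul_ediv_cancel' (den_dvd_sphericalParam_numerator (q, k))]
  ring

theorem sphericalParam_injective : Function.Injective sphericalParam := by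
  rintro ⟨q, k⟩ ⟨q', k'⟩ h
  simp only [sphericalParam, Prod.mk.injEq, Nat.cast_inj] at h
  obtain ⟨hden, ⟨hb, hnum⟩, -⟩ := h
  obtain rfl : q = q' := Rat.ext hnum hden
  have hk : k * q.den = k' * q.den := by linarith
  rw [mul_right_cancel₀ (by exact_mod_cast q.den_ne_zero) hk]

theorem sphericalParam_surjOn :
    Set.SurjOn sphericalParam Set.univ {v | 0 < v.1 ∧ mukaiPairing v v = -2} := by
  rintro ⟨r, ⟨b, n⟩, s⟩ ⟨hr, hv⟩
  rw [mukaiPairing_self_eq_neg_two_iff] at hv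
  change 0 < r at hr
  lift r to ℕ using hr.le
  have hr0 : r ≠ 0 := by omega
  have hcop : IsCoprime n r := ⟨n - b, s, by linarith⟩
  have hdvd : (r : ℤ) ∣ b - n + sphPow n r := by
    refine hcop.symm.dvd_of_dvd_mul_left ?_
    have hsplit : n * (b - n + sphPow n r) = r * s - (1 - n * sphPow n r) := by linarith
    rw [hsplit]
    exact dvd_sub (dvd_mul_right _ _) (mul_sphPow_modEq_one (pos_of_ne_zero hr0) hcop).dvd
  let q : ℚ := ⟨n, r, hr0, Int.isCoprime_iff_nat_coprime.mp hcop⟩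
  refine ⟨(q, (b - n + sphPow n r) / r), trivial, ?_⟩
  have hb : (b - n + sphPow n r) / r * r + n - sphPow n r = b := by
    rw [Int.ediv_mul_cancel hdvd]; ring
  have hs : (-n ^ 2 + n * b + 1) / r = s := by
    rw [show -n ^ 2 + n * b + 1 = r * s by linarith,
      Int.mul_ediv_cancel_left _ (Int.natCast_ne_zero.mpr hr0)]
  simp only [sphericalParam, q]
  rw [hb, hs]

/-- the map `sphericalParam` is well defined (the last entry is an
exact division) and is a bijection from `ℚ × ℤ` onto the set of spherical Mukai
vectors, i.e. the vectors `v` with positive rank and `⟨v,v⟩ = -2`. -/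
theorem sphericalParam_bijection :
    (∀ p : ℚ × ℤ,
      ((p.1.den : ℤ)) ∣
        (-p.1.num ^ 2 + p.1.num * (p.2 * (p.1.den : ℤ) + p.1.num - sphPow p.1.num p.1.den) + 1)) ∧
    Set.BijOn sphericalParam Set.univ
      {v : ℤ × (ℤ × ℤ) × ℤ | 0 < v.1 ∧ mukaiPairing v v = -2} :=
  ⟨den_dvd_sphericalParam_numerator, sphericalParam_mapsTo, sphericalParam_injective.injOn,
    sphericalParam_surjOn⟩
end

section
/- Let m > r ≥ 1 be coprime positive integers and n, s integers with gcd(n,m) = gcd(s,r) = 1. Then the number of integers k satisfying (n/m - s/r)² - 1/r² < (n/m - s/r)·(c - k) < 0 for the appropriate constant c = (n - n^{φ(m)-1})/m - (s - s^{φ(r)-1})/r equals the number of positive integers t such that (rn - ms) divides m² + r² - tmr and m² + r² - tmr > (rn - ms)². -/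
/-- The set of integers `k` counted by `F(n/m, s/r)`: those satisfying
`(n/m - s/r)² - 1/r² < (n/m - s/r)·((n - n^{φ(m)-1})/m - (s - s^{φ(r)-1})/r - k) < 0`. -/
def FSet (n : ℤ) (m : ℕ) (s : ℤ) (r : ℕ) : Set ℤ :=
  {k : ℤ |
    ((n : ℚ) / m - (s : ℚ) / r) ^ 2 - 1 / (r : ℚ) ^ 2 <
      ((n : ℚ) / m - (s : ℚ) / r) *
        (((n : ℚ) - (sphPow n m : ℚ)) / m - ((s : ℚ) - (sphPow s r : ℚ)) / r - (k : ℚ)) ∧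
    ((n : ℚ) / m - (s : ℚ) / r) *
        (((n : ℚ) - (sphPow n m : ℚ)) / m - ((s : ℚ) - (sphPow s r : ℚ)) / r - (k : ℚ)) < 0}

lemma euler_sphPow (n : ℤ) (m : ℕ) (hm : 1 ≤ m) (h : Int.gcd n m = 1) :
    (m : ℤ) ∣ n * sphPow n m - 1 := by
  by_cases hc : m = 1 ∧ n = 0
  · rw [hc.1]; exact one_dvd _
  · have hφ : 1 ≤ Nat.totient m := Nat.totient_pos.mpr hm
    have h1 : n * sphPow n m = n ^ Nat.totient m := by
      rw [sphPow, if_neg hc, ← pow_succ']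
      congr 1
      omega
    rw [h1]
    have hcop : IsCoprime n (m : ℤ) := Int.isCoprime_iff_gcd_eq_one.mpr h
    obtain ⟨a, b, hab⟩ := hcop
    have hu : IsUnit ((n : ZMod m)) := by
      apply IsUnit.of_mul_eq_one ((a : ZMod m))
      have := congrArg (fun x : ℤ => (x : ZMod m)) hab
      push_cast at this
      simpa [mul_comm] using this
    obtain ⟨u, hu⟩ := hu
    have ht := ZMod.pow_totient u
    have h2 : ((n : ZMod m)) ^ Nat.totient m = 1 := by
      rw [← hu, ← Units.val_pow_eq_pow_val, ht, Units.val_one]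
    exact (ZMod.intCast_zmod_eq_zero_iff_dvd (n ^ Nat.totient m - 1) m).mp
      (by push_cast [h2]; ring)

lemma mem_FSet_iff (m r : ℕ) (n s : ℤ) (hm : 0 < m) (hr : 0 < r) (k : ℤ) :
    k ∈ FSet n m s r ↔
      (((r:ℤ)*n - m*s)^2 - (m:ℤ)^2 <
        ((r:ℤ)*n - m*s) *
          ((((r:ℤ)*n - m*s) - ((r:ℤ)*sphPow n m - (m:ℤ)*sphPow s r)) - k*((m:ℤ)*r)) ∧
      ((r:ℤ)*n - m*s) *
          ((((r:ℤ)*n - m*s) - ((r:ℤ)*sphPow n m - (m:ℤ)*sphPow s r)) - k*((m:ℤ)*r)) < 0) := by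
  have hmq : (0:ℚ) < (m:ℚ) := by exact_mod_cast hm
  have hrq : (0:ℚ) < (r:ℚ) := by exact_mod_cast hr
  have hN2 : (0:ℚ) < ((m:ℚ)*(r:ℚ))^2 := by positivity
  have E1 : ((((r:ℤ)*n - m*s)^2 - (m:ℤ)^2 : ℤ) : ℚ)
      = (((n : ℚ) / m - (s : ℚ) / r) ^ 2 - 1 / (r : ℚ) ^ 2) * ((m:ℚ)*(r:ℚ))^2 := by
    push_cast; field_simp
  have E2 : ((((r:ℤ)*n - m*s) *
          ((((r:ℤ)*n - m*s) - ((r:ℤ)*sphPow n m - (m:ℤ)*sphPow s r)) - k*((m:ℤ)*r)) : ℤ) : ℚ)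
      = (((n : ℚ) / m - (s : ℚ) / r) *
        (((n : ℚ) - (sphPow n m : ℚ)) / m - ((s : ℚ) - (sphPow s r : ℚ)) / r - (k : ℚ)))
        * ((m:ℚ)*(r:ℚ))^2 := by
    push_cast; field_simp; ring
  have iff1 : (((r:ℤ)*n - m*s)^2 - (m:ℤ)^2 <
        ((r:ℤ)*n - m*s) *
          ((((r:ℤ)*n - m*s) - ((r:ℤ)*sphPow n m - (m:ℤ)*sphPow s r)) - k*((m:ℤ)*r))) ↔
      (((n : ℚ) / m - (s : ℚ) / r) ^ 2 - 1 / (r : ℚ) ^ 2 <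
      ((n : ℚ) / m - (s : ℚ) / r) *
        (((n : ℚ) - (sphPow n m : ℚ)) / m - ((s : ℚ) - (sphPow s r : ℚ)) / r - (k : ℚ))) := by
    rw [← @Int.cast_lt ℚ, E1, E2, mul_lt_mul_iff_left₀ hN2]
  have iff2 : (((r:ℤ)*n - m*s) *
          ((((r:ℤ)*n - m*s) - ((r:ℤ)*sphPow n m - (m:ℤ)*sphPow s r)) - k*((m:ℤ)*r)) < 0) ↔
      (((n : ℚ) / m - (s : ℚ) / r) *
        (((n : ℚ) - (sphPow n m : ℚ)) / m - ((s : ℚ) - (sphPow s r : ℚ)) / r - (k : ℚ)) < 0) := by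
    rw [← @Int.cast_lt ℚ, E2, Int.cast_zero]
    constructor <;> intro h <;> nlinarith [hN2]
  exact (and_congr iff1 iff2).symm


/-- for coprime `m > r ≥ 1` and `n, s` with `gcd(n,m) = gcd(s,r) = 1`,
the number of integers `k` counted by `F(n/m, s/r)` equals the number of positive
integers `t` such that `rn - ms` divides `m² + r² - tmr` and `m² + r² - tmr > (rn - ms)²`. -/
theorem F_eq_divisor_count (m r : ℕ) (n s : ℤ)
    (hr : 1 ≤ r) (hrm : r < m) (hmr : Nat.gcd m r = 1)
    (hnm : Int.gcd n (m : ℤ) = 1) (hsr : Int.gcd s (r : ℤ) = 1) :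
    (FSet n m s r).ncard =
      {t : ℤ | 1 ≤ t ∧
        ((r : ℤ) * n - (m : ℤ) * s) ∣ ((m : ℤ) ^ 2 + (r : ℤ) ^ 2 - t * m * r) ∧
        ((r : ℤ) * n - (m : ℤ) * s) ^ 2 < (m : ℤ) ^ 2 + (r : ℤ) ^ 2 - t * m * r}.ncard := by
  have hR1 : (1:ℤ) ≤ (r:ℤ) := by exact_mod_cast hr
  have hRM : (r:ℤ) < (m:ℤ) := by exact_mod_cast hrm
  have hNpos : (0:ℤ) < (m:ℤ)*r := by
    have : (0:ℤ) < (m:ℤ) := by linarith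
    have : (0:ℤ) < (r:ℤ) := by linarith
    positivity
  have hmrZ : IsCoprime ((m:ℤ)) ((r:ℤ)) := by
    rw [Int.isCoprime_iff_gcd_eq_one, Int.gcd_natCast_natCast]; exact hmr
  have hnM : IsCoprime n ((m:ℤ)) := Int.isCoprime_iff_gcd_eq_one.mpr hnm
  have hsR : IsCoprime s ((r:ℤ)) := Int.isCoprime_iff_gcd_eq_one.mpr hsr
  have hDM : IsCoprime ((r:ℤ)*n - (m:ℤ)*s) ((m:ℤ)) := by
    have h1 : IsCoprime ((r:ℤ)*n) ((m:ℤ)) := hmrZ.symm.mul_left hnM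
    have h2 := h1.add_mul_left_left (-s)
    rwa [show (r:ℤ)*n + (m:ℤ)*(-s) = (r:ℤ)*n - (m:ℤ)*s by ring] at h2
  have hDR : IsCoprime ((r:ℤ)*n - (m:ℤ)*s) ((r:ℤ)) := by
    have h1 : IsCoprime (-((m:ℤ)*s)) ((r:ℤ)) := (hmrZ.mul_left hsR).neg_left
    have h2 := h1.add_mul_left_left n
    rwa [show -((m:ℤ)*s) + (r:ℤ)*n = (r:ℤ)*n - (m:ℤ)*s by ring] at h2
  have hDN : IsCoprime ((r:ℤ)*n - (m:ℤ)*s) ((m:ℤ)*r) := hDM.mul_right hDR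
  have hD0 : ((r:ℤ)*n - (m:ℤ)*s) ≠ 0 := by
    intro h
    rw [h] at hDN
    have hU := isCoprime_zero_left.mp hDN
    rw [Int.isUnit_iff] at hU
    rcases hU with h' | h' <;> nlinarith
  have e1 : (m:ℤ) ∣ n * sphPow n m - 1 := euler_sphPow n m (by omega) hnm
  have e2 : (r:ℤ) ∣ s * sphPow s r - 1 := euler_sphPow s r hr hsr
  have hcongM : (m:ℤ) ∣ (((r:ℤ)*n - (m:ℤ)*s) * ((r:ℤ)*sphPow n m - (m:ℤ)*sphPow s r)
      - ((m:ℤ)^2 + (r:ℤ)^2)) := by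
    obtain ⟨c, hc⟩ := e1
    exact ⟨(r:ℤ)^2*c + ((m:ℤ)*s*sphPow s r - (r:ℤ)*n*sphPow s r - (r:ℤ)*s*sphPow n m - (m:ℤ)),
      by linear_combination ((r:ℤ)^2)*hc⟩
  have hcongR : (r:ℤ) ∣ (((r:ℤ)*n - (m:ℤ)*s) * ((r:ℤ)*sphPow n m - (m:ℤ)*sphPow s r)
      - ((m:ℤ)^2 + (r:ℤ)^2)) := by
    obtain ⟨c, hc⟩ := e2
    exact ⟨(m:ℤ)^2*c + ((r:ℤ)*n*sphPow n m - (m:ℤ)*s*sphPow n m - (m:ℤ)*n*sphPow s r - (r:ℤ)),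
      by linear_combination ((m:ℤ)^2)*hc⟩
  obtain ⟨w, hw⟩ : ((m:ℤ)*r) ∣ ((m:ℤ)^2 + (r:ℤ)^2
      - ((r:ℤ)*n - (m:ℤ)*s) * ((r:ℤ)*sphPow n m - (m:ℤ)*sphPow s r)) := by
    obtain ⟨c, hc⟩ := hmrZ.mul_dvd hcongM hcongR
    exact ⟨-c, by linear_combination -hc⟩
  -- hw : M²+R² - D*v = (M*R)*w
  have hinj : Function.Injective (fun k : ℤ => w - ((r:ℤ)*n - (m:ℤ)*s) * k) := by
    intro a b hab
    simp only at hab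
    have h3 : ((r:ℤ)*n - (m:ℤ)*s) * a = ((r:ℤ)*n - (m:ℤ)*s) * b := by linarith
    exact mul_left_cancel₀ hD0 h3
  have himg : {t : ℤ | 1 ≤ t ∧
        ((r : ℤ) * n - (m : ℤ) * s) ∣ ((m : ℤ) ^ 2 + (r : ℤ) ^ 2 - t * m * r) ∧
        ((r : ℤ) * n - (m : ℤ) * s) ^ 2 < (m : ℤ) ^ 2 + (r : ℤ) ^ 2 - t * m * r}
      = (fun k : ℤ => w - ((r:ℤ)*n - (m:ℤ)*s) * k) '' FSet n m s r := by
    ext t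
    simp only [Set.mem_setOf_eq, Set.mem_image]
    constructor
    · rintro ⟨ht1, ⟨j, hj⟩, ht3⟩
      -- hj : m²+r² - t*m*r = D * j
      have hdvd : ((m:ℤ)*r) ∣ ((r:ℤ)*n - (m:ℤ)*s) * (j - ((r:ℤ)*sphPow n m - (m:ℤ)*sphPow s r)) :=
        ⟨w - t, by linear_combination -hj + hw⟩
      obtain ⟨k, hk⟩ := hDN.symm.dvd_of_dvd_mul_left hdvd
      -- hk : j - v = (m*r)*k
      have hDj : ((r:ℤ)*n - (m:ℤ)*s) *
            ((((r:ℤ)*n - (m:ℤ)*s) - ((r:ℤ)*sphPow n m - (m:ℤ)*sphPow s r)) - k*((m:ℤ)*r))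
          = ((r:ℤ)*n - (m:ℤ)*s)^2 - ((m:ℤ)^2 + (r:ℤ)^2 - t*m*r) := by
        linear_combination hj + ((r:ℤ)*n - (m:ℤ)*s)*hk
      refine ⟨k, ?_, ?_⟩
      · rw [mem_FSet_iff m r n s (by omega) hr, hDj]
        constructor
        · nlinarith [mul_le_mul_of_nonneg_right ht1 hNpos.le]
        · linarith
      · -- w - D*k = t
        have hNne : ((m:ℤ)*r) ≠ 0 := ne_of_gt hNpos
        have hmt : ((m:ℤ)*r) * (w - ((r:ℤ)*n - (m:ℤ)*s)*k) = ((m:ℤ)*r) * t := by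
          linear_combination -hw + hj + ((r:ℤ)*n - (m:ℤ)*s)*hk
        have := mul_left_cancel₀ hNne hmt
        simpa using this
    · rintro ⟨k, hkF, rfl⟩
      rw [mem_FSet_iff m r n s (by omega) hr] at hkF
      obtain ⟨h1, h2⟩ := hkF
      have key : (w - ((r:ℤ)*n - (m:ℤ)*s)*k) * m * r
          = (m:ℤ)^2 + (r:ℤ)^2 - ((r:ℤ)*n - (m:ℤ)*s)
              * (((r:ℤ)*sphPow n m - (m:ℤ)*sphPow s r) + k*((m:ℤ)*r)) := by
        linear_combination -hw
      have hid : ((r:ℤ)*n - (m:ℤ)*s) *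
            ((((r:ℤ)*n - (m:ℤ)*s) - ((r:ℤ)*sphPow n m - (m:ℤ)*sphPow s r)) - k*((m:ℤ)*r))
          = ((r:ℤ)*n - (m:ℤ)*s)^2 - ((r:ℤ)*n - (m:ℤ)*s)
              * (((r:ℤ)*sphPow n m - (m:ℤ)*sphPow s r) + k*((m:ℤ)*r)) := by ring
      rw [hid] at h1 h2
      refine ⟨?_, ⟨((r:ℤ)*sphPow n m - (m:ℤ)*sphPow s r) + k*((m:ℤ)*r), by linarith [key]⟩, ?_⟩
      · -- 1 ≤ w - D*k
        by_contra hcon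
        push_neg at hcon
        have hle : w - ((r:ℤ)*n - (m:ℤ)*s)*k ≤ 0 := by omega
        nlinarith [mul_nonneg (neg_nonneg.mpr hle) (le_of_lt hNpos)]
      · linarith [key]
  rw [himg, Set.ncard_image_of_injective _ hinj]
end

section
/- Let m, r, d be positive integers with r < m, d ≤ m - 1, gcd(m,r) = 1 and gcd(mr, d) = 1. Then there exists exactly one pair (n,s) of integers with 1 ≤ n ≤ m-1, 0 ≤ s ≤ r, gcd(n,m) = gcd(s,r) = 1, and rn - ms = d. -/
/-- for positive integers `m, r, d` with `r < m`, `d ≤ m - 1`,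
`gcd(m,r) = 1` and `gcd(mr, d) = 1`, there is exactly one pair `(n,s)` of integers
with `1 ≤ n ≤ m-1`, `0 ≤ s ≤ r`, `gcd(n,m) = gcd(s,r) = 1` and `rn - ms = d`. -/
theorem unique_pair_in_Smr (m r d : ℤ)
    (hr : 1 ≤ r) (hrm : r < m) (hd : 1 ≤ d) (hdm : d ≤ m - 1)
    (hmr : Int.gcd m r = 1) (hmrd : Int.gcd (m * r) d = 1) :
    ∃! p : ℤ × ℤ,
      1 ≤ p.1 ∧ p.1 ≤ m - 1 ∧ 0 ≤ p.2 ∧ p.2 ≤ r ∧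
      Int.gcd p.1 m = 1 ∧ Int.gcd p.2 r = 1 ∧
      r * p.1 - m * p.2 = d := by
  have hm2 : (2:ℤ) ≤ m := by omega
  have hm0 : (0:ℤ) < m := by omega
  have hcop : IsCoprime m r := Int.isCoprime_iff_gcd_eq_one.mpr hmr
  obtain ⟨a, b, hab⟩ := hcop
  set n : ℤ := (b * d) % m with hn
  have hn0 : 0 ≤ n := Int.emod_nonneg _ (by omega)
  have hnm : n < m := Int.emod_lt_of_pos _ hm0
  have hdvd1 : m ∣ n - b * d := ⟨-(b * d / m), by rw [hn, Int.emod_def]; ring⟩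
  have hdvd2 : m ∣ r * n - d := by
    have h1 : r * n - d = r * (n - b * d) + (r * b - 1) * d := by ring
    rw [h1]
    refine dvd_add (hdvd1.mul_left r) ⟨-(a * d), ?_⟩
    have h2 : r * b - 1 = -(a * m) := by linarith
    rw [h2]; ring
  set s : ℤ := (r * n - d) / m with hs
  have hms : m * s = r * n - d := Int.mul_ediv_cancel' hdvd2
  have hn1 : 1 ≤ n := by
    rcases eq_or_lt_of_le hn0 with h | h
    · exfalso
      have hmd : m ∣ d := by
        have h2 := hdvd2
        rw [← h] at h2
        simpa using (dvd_neg.mpr h2)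
      have h3 : m ∣ ((Int.gcd (m * r) d : ℕ) : ℤ) :=
        Int.dvd_coe_gcd (dvd_mul_right m r) hmd
      rw [hmrd] at h3
      have := Int.le_of_dvd (by norm_num) h3
      omega
    · omega
  have hs0 : 0 ≤ s := by nlinarith [hms]
  have hsr : s ≤ r := by nlinarith [hms]
  have hgcd_nm : Int.gcd n m = 1 := by
    have h1 : ((Int.gcd n m : ℕ) : ℤ) ∣ d := by
      have hd' : d = r * n - m * s := by linarith
      rw [hd']
      exact dvd_sub ((Int.gcd_dvd_left (a := n) (b := m)).mul_left r)
        ((Int.gcd_dvd_right (a := n) (b := m)).mul_right s)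
    have h2 : ((Int.gcd n m : ℕ) : ℤ) ∣ m * r :=
      (Int.gcd_dvd_right (a := n) (b := m)).mul_right r
    have h3 : ((Int.gcd n m : ℕ) : ℤ) ∣ ((Int.gcd (m * r) d : ℕ) : ℤ) :=
      Int.dvd_coe_gcd h2 h1
    rw [hmrd] at h3
    exact Nat.dvd_one.mp (by exact_mod_cast h3)
  have hgcd_sr : Int.gcd s r = 1 := by
    have h1 : ((Int.gcd s r : ℕ) : ℤ) ∣ d := by
      have h2 : ((Int.gcd s r : ℕ) : ℤ) ∣ r * n - m * s :=
        dvd_sub ((Int.gcd_dvd_right (a := s) (b := r)).mul_right n)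
          ((Int.gcd_dvd_left (a := s) (b := r)).mul_left m)
      rw [show r * n - m * s = d by linarith] at h2
      exact h2
    have h2 : ((Int.gcd s r : ℕ) : ℤ) ∣ m * r :=
      (Int.gcd_dvd_right (a := s) (b := r)).mul_left m
    have h3 : ((Int.gcd s r : ℕ) : ℤ) ∣ ((Int.gcd (m * r) d : ℕ) : ℤ) :=
      Int.dvd_coe_gcd h2 h1
    rw [hmrd] at h3
    exact Nat.dvd_one.mp (by exact_mod_cast h3)
  refine ⟨(n, s), ⟨hn1, by omega, hs0, hsr, hgcd_nm, hgcd_sr, by linarith⟩, ?_⟩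
  rintro ⟨n', s'⟩ ⟨g1, g2, g3, g4, g5, g6, g7⟩
  simp only at g1 g2 g3 g4 g7
  have key : r * (n' - n) = m * (s' - s) := by
    have : r * n - m * s = d := by linarith
    linarith [g7, this]
  have hdvdn : m ∣ n' - n := by
    have hcop' : IsCoprime m r := Int.isCoprime_iff_gcd_eq_one.mpr hmr
    exact hcop'.dvd_of_dvd_mul_left ⟨s' - s, key⟩
  obtain ⟨k, hk⟩ := hdvdn
  have hk0 : k = 0 := by nlinarith [hk]
  have hnn : n' = n := by rw [hk0, mul_zero] at hk; omega
  have hss : s' = s := by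
    rw [hnn] at key
    have : m * (s' - s) = 0 := by linarith
    have := (mul_eq_zero.mp this).resolve_left (by omega)
    omega
  simp [Prod.ext_iff, hnn, hss]
end

section
/- Let m, r, d be positive integers with r < m and d ≤ m - 1. If (n,s) is a pair of integers with 1 ≤ n ≤ m-1, 0 ≤ s ≤ r, gcd(n,m) = gcd(s,r) = 1 and rn - ms = d, and a = gcd(m,r), then a divides d and gcd(mr/a², d/a) = 1. -/
/-- if `r < m`, `d ≤ m - 1` are positive integers and `(n,s)` satisfies
`1 ≤ n ≤ m-1`, `0 ≤ s ≤ r`, `gcd(n,m) = gcd(s,r) = 1`, `rn - ms = d`, then with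
`a = gcd(m,r)` one has `a ∣ d` and `gcd(mr/a², d/a) = 1`. -/
theorem divisibility_conditions_for_solution (m r d : ℤ) (n s : ℤ)
    (hr : 1 ≤ r) (hrm : r < m) (hd : 1 ≤ d) (hdm : d ≤ m - 1)
    (hn1 : 1 ≤ n) (hn2 : n ≤ m - 1) (hs1 : 0 ≤ s) (hs2 : s ≤ r)
    (hnm : Int.gcd n m = 1) (hsr : Int.gcd s r = 1)
    (heq : r * n - m * s = d) :
    (Int.gcd m r : ℤ) ∣ d ∧
      Int.gcd ((m * r) / ((Int.gcd m r : ℤ) * (Int.gcd m r : ℤ)))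
        (d / (Int.gcd m r : ℤ)) = 1 := by
  set a : ℤ := (Int.gcd m r : ℤ) with ha
  have ham : a ∣ m := Int.gcd_dvd_left m r
  have har : a ∣ r := Int.gcd_dvd_right m r
  have ha0 : a ≠ 0 := by
    have : (0:ℤ) < m := by linarith
    simpa [ha, Int.gcd_eq_zero_iff] using fun h => by omega
  obtain ⟨m', hm'⟩ := ham
  obtain ⟨r', hr'⟩ := har
  have hdvd : a ∣ d := by
    refine ⟨r' * n - m' * s, ?_⟩
    rw [← heq, hm', hr']; ring
  refine ⟨hdvd, ?_⟩
  have hmr : m * r / (a * a) = m' * r' := by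
    rw [hm', hr']
    rw [show a * m' * (a * r') = (a * a) * (m' * r') by ring]
    exact Int.mul_ediv_cancel_left _ (mul_ne_zero ha0 ha0)
  have hda : d / a = r' * n - m' * s := by
    rw [← heq, hm', hr', show a * r' * n - a * m' * s = a * (r' * n - m' * s) by ring]
    exact Int.mul_ediv_cancel_left _ ha0
  rw [hmr, hda]
  -- coprimality facts
  have hcop_m'r' : IsCoprime m' r' := by
    rw [Int.isCoprime_iff_gcd_eq_one]
    have hpos : 0 < Int.gcd m r := by
      rcases Nat.eq_zero_or_pos (Int.gcd m r) with h | h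
      · exact absurd (by rw [ha, h]; simp : a = 0) ha0
      · exact h
    have := Int.gcd_div_gcd_div_gcd (i := m) (j := r) hpos
    have h1 : m / a = m' := by rw [hm']; exact Int.mul_ediv_cancel_left _ ha0
    have h2 : r / a = r' := by rw [hr']; exact Int.mul_ediv_cancel_left _ ha0
    rwa [h1, h2] at this
  have hcop_nm : IsCoprime n m := Int.isCoprime_iff_gcd_eq_one.mpr hnm
  have hcop_sr : IsCoprime s r := Int.isCoprime_iff_gcd_eq_one.mpr hsr
  have hcop_m'n : IsCoprime m' n := by
    have : m' ∣ m := ⟨a, by rw [hm']; ring⟩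
    exact ((hcop_nm.symm).of_isCoprime_of_dvd_left this)
  have hcop_r's : IsCoprime r' s := by
    have : r' ∣ r := ⟨a, by rw [hr']; ring⟩
    exact ((hcop_sr.symm).of_isCoprime_of_dvd_left this)
  have h1 : IsCoprime m' (r' * n - m' * s) := by
    have : IsCoprime m' (r' * n) := (hcop_m'r'.mul_right hcop_m'n)
    have := this.add_mul_left_right (-s)
    simpa [mul_comm, sub_eq_add_neg, mul_neg] using this
  have h2 : IsCoprime r' (r' * n - m' * s) := by
    have : IsCoprime r' (-(m' * s)) := ((hcop_m'r'.symm.mul_right hcop_r's)).neg_right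
    have := this.add_mul_left_right n
    have heq2 : -(m' * s) + r' * n = r' * n - m' * s := by ring
    rwa [heq2] at this
  rw [← Int.isCoprime_iff_gcd_eq_one]
  exact h1.mul_left h2
end

section
/- Let m > r ≥ 1 with gcd(m,r) = 1, and let n, s with gcd(n,m) = gcd(s,r) = 1 and |rn - ms| < m. Then F(n/m, s/r) ≥ ⌊(m² - (rn-ms)²)/(m·r·|rn - ms|)⌋, where F(n/m, s/r) is the number of integers k satisfying (n/m - s/r)² - 1/r² < (n/m - s/r)·((n - n^{φ(m)-1})/m - (s - s^{φ(r)-1})/r - k) < 0. Moreover if |rn - ms| ≥ m then F(n/m, s/r) = 0. -/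
/-- An open interval `(a, b)` of rationals whose length `b - a` is not an
integer contains at least `⌊b - a⌋` integers. -/
lemma count_aux (a b : ℚ) (h : ∀ z : ℤ, (z : ℚ) ≠ b - a) :
    ⌊b - a⌋ ≤ (({k : ℤ | a < (k : ℚ) ∧ (k : ℚ) < b}).ncard : ℤ) := by
  have hset : {k : ℤ | a < (k : ℚ) ∧ (k : ℚ) < b} = Set.Ioo ⌊a⌋ ⌈b⌉ := by
    ext k
    simp [Set.mem_Ioo, Int.floor_lt, Int.lt_ceil]
  have hcard : (Set.Ioo ⌊a⌋ ⌈b⌉).ncard = (⌈b⌉ - ⌊a⌋ - 1).toNat := by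
    rw [Set.ncard_eq_toFinset_card']
    simp [Int.card_Ioo]
  rw [hset, hcard]
  have hlt : (⌊b - a⌋ : ℚ) < (⌈b⌉ : ℚ) - (⌊a⌋ : ℚ) := by
    have h1 : (⌊b - a⌋ : ℚ) ≤ b - a := Int.floor_le _
    have h2 : (⌊b - a⌋ : ℚ) ≠ b - a := h _
    have h3 : b ≤ (⌈b⌉ : ℚ) := Int.le_ceil b
    have h4 : (⌊a⌋ : ℚ) ≤ a := Int.floor_le a
    have h5 : (⌊b - a⌋ : ℚ) < b - a := lt_of_le_of_ne h1 h2
    linarith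
  have hZ : ⌊b - a⌋ < ⌈b⌉ - ⌊a⌋ := by exact_mod_cast hlt
  calc ⌊b - a⌋ ≤ ⌈b⌉ - ⌊a⌋ - 1 := by omega
    _ ≤ (((⌈b⌉ - ⌊a⌋ - 1).toNat : ℤ)) := Int.self_le_toNat _

/-- for coprime `m > r ≥ 1` and `n, s` with `gcd(n,m) = gcd(s,r) = 1`:
if `|rn - ms| < m` then `F(n/m, s/r) ≥ ⌊(m² - (rn-ms)²)/(m·r·|rn-ms|)⌋`, and if
`|rn - ms| ≥ m` then `F(n/m, s/r) = 0`. -/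
theorem F_lower_bound_and_vanishing (m r : ℕ) (n s : ℤ)
    (hr : 1 ≤ r) (hrm : r < m) (hmr : Nat.gcd m r = 1)
    (hnm : Int.gcd n (m : ℤ) = 1) (hsr : Int.gcd s (r : ℤ) = 1) :
    (|(r : ℤ) * n - (m : ℤ) * s| < (m : ℤ) →
      ⌊(((m : ℚ) ^ 2 - ((r : ℤ) * n - (m : ℤ) * s : ℤ) ^ 2) /
          ((m : ℚ) * r * |((r : ℤ) * n - (m : ℤ) * s : ℤ)|) : ℚ)⌋
        ≤ ((FSet n m s r).ncard : ℤ)) ∧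
    ((m : ℤ) ≤ |(r : ℤ) * n - (m : ℤ) * s| → FSet n m s r = ∅) := by
  have hm2 : 2 ≤ m := by omega
  have hmQ : (0 : ℚ) < (m : ℚ) := by exact_mod_cast (by omega : 0 < m)
  have hrQ : (0 : ℚ) < (r : ℚ) := by exact_mod_cast (by omega : 0 < r)
  set d : ℤ := (r : ℤ) * n - (m : ℤ) * s with hdd
  set C : ℚ := ((n : ℚ) - (sphPow n m : ℚ)) / m - ((s : ℚ) - (sphPow s r : ℚ)) / r with hC
  set q : ℚ := (d : ℚ) / ((m : ℚ) * (r : ℚ)) with hqdef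
  have hq : (n : ℚ) / m - (s : ℚ) / r = q := by
    rw [hqdef, hdd]
    push_cast
    field_simp
  have hmem : ∀ k : ℤ, k ∈ FSet n m s r ↔
      (q ^ 2 - 1 / (r : ℚ) ^ 2 < q * (C - (k : ℚ)) ∧ q * (C - (k : ℚ)) < 0) := by
    intro k
    simp only [FSet, Set.mem_setOf_eq]
    rw [hq, ← hC]
  clear_value d C q
  constructor
  · -- lower bound
    intro hlt
    rcases eq_or_ne d 0 with h0 | h0
    · rw [h0]
      norm_num
    -- nonzero difference
    have hdQ : ((d : ℚ)) ≠ 0 := Int.cast_ne_zero.mpr h0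
    have habs : (0 : ℚ) < |(d : ℚ)| := abs_pos.mpr hdQ
    rw [Int.cast_abs]
    set L : ℚ := ((m : ℚ) ^ 2 - (d : ℚ) ^ 2) / ((m : ℚ) * (r : ℚ) * |(d : ℚ)|) with hL
    have hLnotint : ∀ z : ℤ, (z : ℚ) ≠ L := by
      intro z hz
      have hden : ((m : ℚ) * (r : ℚ) * |(d : ℚ)|) ≠ 0 := by positivity
      rw [hL, eq_div_iff hden] at hz
      have hzZ : z * ((m : ℤ) * (r : ℤ) * |d|) = (m : ℤ) ^ 2 - d ^ 2 := by
        exact_mod_cast hz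
      have hdvd : (m : ℤ) ∣ d ^ 2 :=
        ⟨(m : ℤ) - z * (r : ℤ) * |d|, by linear_combination hzZ⟩
      have h1 : (m : ℤ) ∣ d - (r : ℤ) * n := ⟨-s, by rw [hdd]; ring⟩
      have hdvd2 : (m : ℤ) ∣ ((r : ℤ) * n) ^ 2 := by
        have hiden : ((r : ℤ) * n) ^ 2 = d ^ 2 - (d - (r : ℤ) * n) * (d + (r : ℤ) * n) := by
          ring
        rw [hiden]
        exact dvd_sub hdvd (h1.mul_right _)
      have hcop : IsCoprime ((m : ℤ)) (((r : ℤ) * n) ^ 2) := by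
        apply IsCoprime.pow_right
        apply IsCoprime.mul_right
        · rw [Int.isCoprime_iff_gcd_eq_one, Int.gcd_natCast_natCast]
          exact hmr
        · rw [Int.isCoprime_iff_gcd_eq_one, Int.gcd_comm]
          exact hnm
      have hunit := hcop.isUnit_of_dvd' dvd_rfl hdvd2
      rw [Int.isUnit_iff] at hunit
      omega
    rcases lt_or_gt_of_ne h0 with hneg | hpos
    · -- d < 0
      have hdQ' : ((d : ℚ)) < 0 := by exact_mod_cast hneg
      have hq0 : q < 0 := by
        rw [hqdef]
        exact div_neg_of_neg_of_pos hdQ' (by positivity)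
      have hqL : q * L = q ^ 2 - 1 / (r : ℚ) ^ 2 := by
        rw [hqdef, hL, abs_of_neg hdQ']
        field_simp
        ring
      have hset2 : FSet n m s r = {k : ℤ | C - L < (k : ℚ) ∧ (k : ℚ) < C} := by
        ext k
        rw [hmem k]
        simp only [Set.mem_setOf_eq]
        constructor
        · rintro ⟨h1, h2⟩
          rw [← hqL] at h1
          have hk1 : C - (k : ℚ) < L := (mul_lt_mul_left_of_neg hq0).mp h1
          have h2' : q * (C - (k : ℚ)) < q * 0 := by rw [mul_zero]; exact h2
          have hk2 : (0 : ℚ) < C - (k : ℚ) := (mul_lt_mul_left_of_neg hq0).mp h2'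
          constructor <;> linarith
        · rintro ⟨h1, h2⟩
          have hk1 : q * L < q * (C - (k : ℚ)) :=
            (mul_lt_mul_left_of_neg hq0).mpr (by linarith)
          have hk2 : q * (C - (k : ℚ)) < q * 0 :=
            (mul_lt_mul_left_of_neg hq0).mpr (by linarith)
          rw [hqL] at hk1
          rw [mul_zero] at hk2
          exact ⟨hk1, hk2⟩
      rw [hset2]
      have hba : C - (C - L) = L := by ring
      have := count_aux (C - L) C (by rw [hba]; exact hLnotint)
      rw [hba] at this
      exact this
    · -- d > 0
      have hdQ' : (0 : ℚ) < (d : ℚ) := by exact_mod_cast hpos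
      have hq0 : 0 < q := by
        rw [hqdef]
        exact div_pos hdQ' (by positivity)
      have hqL : q * L = 1 / (r : ℚ) ^ 2 - q ^ 2 := by
        rw [hqdef, hL, abs_of_pos hdQ']
        field_simp
      have hset2 : FSet n m s r = {k : ℤ | C < (k : ℚ) ∧ (k : ℚ) < C + L} := by
        ext k
        rw [hmem k]
        simp only [Set.mem_setOf_eq]
        constructor
        · rintro ⟨h1, h2⟩
          have h1' : q * ((k : ℚ) - C) < q * L := by
            have e : q * ((k : ℚ) - C) = -(q * (C - (k : ℚ))) := by ring
            rw [e, hqL]; linarith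
          have hk1 : (k : ℚ) - C < L := (mul_lt_mul_iff_right₀ hq0).mp h1'
          have h2' : q * (C - (k : ℚ)) < q * 0 := by rw [mul_zero]; exact h2
          have hk2 : C - (k : ℚ) < 0 := (mul_lt_mul_iff_right₀ hq0).mp h2'
          constructor <;> linarith
        · rintro ⟨h1, h2⟩
          have hk1 : q * (C - (k : ℚ)) < q * 0 :=
            (mul_lt_mul_iff_right₀ hq0).mpr (by linarith)
          rw [mul_zero] at hk1
          have hk2 : q * ((k : ℚ) - C) < q * L :=
            (mul_lt_mul_iff_right₀ hq0).mpr (by linarith)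
          rw [hqL] at hk2
          have e : q * (C - (k : ℚ)) = -(q * ((k : ℚ) - C)) := by ring
          exact ⟨by linarith [hk2, e], hk1⟩
      rw [hset2]
      have hba : (C + L) - C = L := by ring
      have := count_aux C (C + L) (by rw [hba]; exact hLnotint)
      rw [hba] at this
      exact this
  · -- vanishing
    intro h
    have hd2 : (m : ℚ) ^ 2 ≤ (d : ℚ) ^ 2 := by
      have hZ : (m : ℤ) ^ 2 ≤ d ^ 2 := by
        nlinarith [sq_abs d, abs_nonneg d]
      exact_mod_cast hZ
    have hge : (0 : ℚ) ≤ q ^ 2 - 1 / (r : ℚ) ^ 2 := by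
      have hiden : q ^ 2 - 1 / (r : ℚ) ^ 2 = ((d : ℚ) ^ 2 - (m : ℚ) ^ 2) / ((m : ℚ) ^ 2 * (r : ℚ) ^ 2) := by
        rw [hqdef]
        field_simp
      rw [hiden]
      apply div_nonneg (by linarith) (by positivity)
    ext k
    simp only [Set.mem_empty_iff_false, iff_false]
    rw [hmem k]
    rintro ⟨h1, h2⟩
    linarith
end

section
/- The symmetry F(n/m, s/r) = F(1 - n/m, 1 - s/r) holds: for coprime fractions n/m and s/r with 1 ≤ r < m, the number of integer solutions k of the wall inequality for the pair (n/m, s/r) equals that for the pair ((m-n)/m, (r-s)/r). -/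
lemma sph_add_dvd (m : ℕ) (hm : 1 ≤ m) (n : ℤ) :
    (m : ℤ) ∣ sphPow n m + sphPow ((m : ℤ) - n) m := by
  rcases eq_or_lt_of_le hm with h1 | h2
  · rw [← h1]; exact one_dvd _
  · have hc1 : ¬(m = 1 ∧ n = 0) := by omega
    have hc2 : ¬(m = 1 ∧ (m : ℤ) - n = 0) := by omega
    unfold sphPow
    rw [if_neg hc1, if_neg hc2]
    rcases eq_or_lt_of_le (show 2 ≤ m from h2) with h3 | h4
    · rw [← h3]
      norm_num [Nat.totient_two]
    · have he : Odd (Nat.totient m - 1) := by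
        have hev : Even (Nat.totient m) := Nat.totient_even h4
        have hpos : 1 ≤ Nat.totient m := Nat.totient_pos.mpr (by omega)
        exact Nat.Even.sub_odd hpos hev odd_one
      rw [← ZMod.intCast_zmod_eq_zero_iff_dvd]
      push_cast
      rw [ZMod.natCast_self]
      rw [zero_sub, he.neg_pow]
      ring

/-- the symmetry `F(n/m, s/r) = F(1 - n/m, 1 - s/r)`: for
`1 ≤ r < m` with `gcd(n,m) = gcd(s,r) = 1`, the number of integer solutions `k`
for the pair `(n/m, s/r)` equals that for `((m-n)/m, (r-s)/r)`. -/
theorem F_symmetry (m r : ℕ) (n s : ℤ)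
    (hr : 1 ≤ r) (hrm : r < m)
    (hnm : Int.gcd n (m : ℤ) = 1) (hsr : Int.gcd s (r : ℤ) = 1) :
    (FSet n m s r).ncard = (FSet ((m : ℤ) - n) m ((r : ℤ) - s) r).ncard := by
  obtain ⟨a, ha⟩ := sph_add_dvd m (by omega) n
  obtain ⟨b, hb⟩ := sph_add_dvd r hr s
  have hm0 : (m : ℚ) ≠ 0 := by
    exact_mod_cast Nat.cast_ne_zero.mpr (by omega)
  have hr0 : (r : ℚ) ≠ 0 := Nat.cast_ne_zero.mpr (by omega)
  have hP : ((sphPow ((m : ℤ) - n) m : ℤ) : ℚ) = m * a - (sphPow n m : ℚ) := by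
    have h' : ((sphPow n m : ℤ) : ℚ) + ((sphPow ((m : ℤ) - n) m : ℤ) : ℚ) = (m : ℚ) * a := by
      exact_mod_cast congrArg (fun x : ℤ => (x : ℚ)) ha
    linarith
  have hQ : ((sphPow ((r : ℤ) - s) r : ℤ) : ℚ) = r * b - (sphPow s r : ℚ) := by
    have h' : ((sphPow s r : ℤ) : ℚ) + ((sphPow ((r : ℤ) - s) r : ℤ) : ℚ) = (r : ℚ) * b := by
      exact_mod_cast congrArg (fun x : ℤ => (x : ℚ)) hb
    linarith
  have key : ∀ k : ℤ,
      ((((m : ℤ) - n : ℤ) : ℚ) / m - (((r : ℤ) - s : ℤ) : ℚ) / r) *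
        (((((m : ℤ) - n : ℤ) : ℚ) - (sphPow ((m : ℤ) - n) m : ℚ)) / m -
          ((((r : ℤ) - s : ℤ) : ℚ) - (sphPow ((r : ℤ) - s) r : ℚ)) / r - (k : ℚ))
      = ((n : ℚ) / m - (s : ℚ) / r) *
        (((n : ℚ) - (sphPow n m : ℚ)) / m - ((s : ℚ) - (sphPow s r : ℚ)) / r
          - ((b - a - k : ℤ) : ℚ)) := by
    intro k
    rw [hP, hQ]
    push_cast
    field_simp
    ring
  have keysq : ∀ k : ℤ, True := fun _ => trivial
  have hsq : ((((m : ℤ) - n : ℤ) : ℚ) / m - (((r : ℤ) - s : ℤ) : ℚ) / r) ^ 2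
      = ((n : ℚ) / m - (s : ℚ) / r) ^ 2 := by
    push_cast
    field_simp
    ring
  have hiff : ∀ k : ℤ, k ∈ FSet ((m : ℤ) - n) m ((r : ℤ) - s) r ↔
      (b - a - k) ∈ FSet n m s r := by
    intro k
    simp only [FSet, Set.mem_setOf_eq]
    rw [key k, hsq]
  have himg : FSet ((m : ℤ) - n) m ((r : ℤ) - s) r
      = (fun k : ℤ => b - a - k) '' FSet n m s r := by
    ext k
    rw [hiff k]
    constructor
    · intro h
      exact ⟨b - a - k, h, by ring⟩
    · rintro ⟨k', hk', rfl⟩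
      simpa using hk'
  rw [himg, Set.ncard_image_of_injective]
  intro x y h
  have : b - a - x = b - a - y := h
  omega
end
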